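/- arXiv:1903.08468 — 2 statements merged into one kernel-verified Lean document; each statement's English description precedes it below -/
import Mathlib

section
/- Let K ≥ N ≥ 1 be integers, let z̃, ṽ, ũ ∈ ℂ^N with ũ ≠ 0 and P⊥_ũ ṽ ≠ 0, and let b ≥ 0. Define g : ℂ → ℝ by g(α) = (1+b)^{−1} (1 + b + ‖z̃ − α ṽ‖²)^{−(K+1)} · [((1+b) + ‖P⊥_ũ (z̃ − α ṽ)‖²)/(1 + ‖P⊥_ũ (z̃ − α ṽ)‖²)]^{K+1}. Set α₁ = (ṽ† ṽ)⁻¹ ṽ† z̃ and α₂ = (ṽ† P⊥_ũ ṽ)⁻¹ ṽ† P⊥_ũ z̃. Then the supremum of g over ℂ is attained at some point of the segment {t α₁ + (1−t) α₂ : t ∈ [0,1]}, i.e., there exists t ∈ [0,1] such that g(t α₁ + (1−t) α₂) ≥ g(α) for all α ∈ ℂ. -/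
open Matrix
open scoped ComplexOrder

/-- Squared Euclidean norm of a complex vector. -/
noncomputable def nsq {N : ℕ} (w : Fin N → ℂ) : ℝ := (star w ⬝ᵥ w).re

/-- Orthogonal projection matrix `P⊥_q = I − q q†/‖q‖²` onto the orthogonal complement
of the span of `q`. -/
noncomputable def projPerp {N : ℕ} (q : Fin N → ℂ) : Matrix (Fin N) (Fin N) ℂ :=
  1 - (star q ⬝ᵥ q)⁻¹ • vecMulVec q (star q)

lemma star_dot_self_conj {N : ℕ} (w : Fin N → ℂ) :
    (starRingEnd ℂ) (star w ⬝ᵥ w) = star w ⬝ᵥ w := by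
  conv_rhs => rw [star_dotProduct]; simp

lemma dot_star_eq {N : ℕ} (a w : Fin N → ℂ) :
    star a ⬝ᵥ w = (starRingEnd ℂ) (star w ⬝ᵥ a) := by
  rw [star_dotProduct]; simp

lemma nsq_nonneg {N : ℕ} (w : Fin N → ℂ) : 0 ≤ nsq w := by
  have h := dotProduct_star_self_nonneg w
  rw [Complex.le_def] at h
  simpa [nsq] using h.1

lemma dot_self_ne_zero {N : ℕ} {w : Fin N → ℂ} (hw : w ≠ 0) : star w ⬝ᵥ w ≠ 0 := by
  simpa [dotProduct_star_self_eq_zero] using hw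

lemma dot_expand {N : ℕ} (y w : Fin N → ℂ) (γ : ℂ) :
    star (y - γ • w) ⬝ᵥ (y - γ • w) =
      star y ⬝ᵥ y - (starRingEnd ℂ) γ * (star w ⬝ᵥ y)
        - γ * (starRingEnd ℂ) (star w ⬝ᵥ y) + (starRingEnd ℂ) γ * γ * (star w ⬝ᵥ w) := by
  rw [star_sub, star_smul, sub_dotProduct, dotProduct_sub, dotProduct_sub,
    smul_dotProduct, smul_dotProduct, dotProduct_smul, dotProduct_smul,
    dot_star_eq y w]
  simp only [smul_eq_mul, star_trivial, RCLike.star_def]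
  ring

lemma nsq_sub_smul {N : ℕ} (y w : Fin N → ℂ) (hw : star w ⬝ᵥ w ≠ 0) (α : ℂ) :
    nsq (y - α • w) = Complex.normSq (α - (star w ⬝ᵥ w)⁻¹ * (star w ⬝ᵥ y)) * nsq w
      + nsq (y - ((star w ⬝ᵥ w)⁻¹ * (star w ⬝ᵥ y)) • w) := by
  have hcq : (starRingEnd ℂ) (star w ⬝ᵥ w) = star w ⬝ᵥ w := star_dot_self_conj w
  have key : star (y - α • w) ⬝ᵥ (y - α • w)
      = ((Complex.normSq (α - (star w ⬝ᵥ w)⁻¹ * (star w ⬝ᵥ y)) : ℝ) : ℂ) * (star w ⬝ᵥ w)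
        + star (y - ((star w ⬝ᵥ w)⁻¹ * (star w ⬝ᵥ y)) • w) ⬝ᵥ
            (y - ((star w ⬝ᵥ w)⁻¹ * (star w ⬝ᵥ y)) • w) := by
    rw [dot_expand, dot_expand, Complex.normSq_eq_conj_mul_self, map_sub, _root_.map_mul,
      map_inv₀, hcq]
    field_simp
    ring
  have h2 := congrArg Complex.re key
  rw [Complex.add_re] at h2
  unfold nsq
  rw [h2]
  congr 1
  simp [Complex.mul_re]

lemma projPerp_mulVec {N : ℕ} (u x : Fin N → ℂ) :
    projPerp u *ᵥ x = x - ((star u ⬝ᵥ u)⁻¹ * (star u ⬝ᵥ x)) • u := by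
  unfold projPerp
  rw [sub_mulVec, one_mulVec, smul_mulVec]
  congr 1
  funext i
  simp only [mulVec, vecMulVec_apply, dotProduct, Pi.smul_apply, smul_eq_mul,
    Finset.mul_sum, Finset.sum_mul]
  apply Finset.sum_congr rfl
  intro j _
  ring

lemma dot_projPerp_zero {N : ℕ} (u c : Fin N → ℂ) (hq : star u ⬝ᵥ u ≠ 0) :
    star u ⬝ᵥ (projPerp u *ᵥ c) = 0 := by
  rw [projPerp_mulVec, dotProduct_sub, dotProduct_smul, smul_eq_mul]
  field_simp; ring

lemma proj_dot {N : ℕ} (u a c : Fin N → ℂ) (hq : star u ⬝ᵥ u ≠ 0) :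
    star (projPerp u *ᵥ a) ⬝ᵥ (projPerp u *ᵥ c) = star a ⬝ᵥ (projPerp u *ᵥ c) := by
  conv_lhs => rw [projPerp_mulVec u a]
  rw [star_sub, star_smul, sub_dotProduct, smul_dotProduct, dot_projPerp_zero u c hq]
  simp

lemma aux_cs (a c : ℂ) (t : ℝ) (h0 : 0 ≤ t)
    (hts : t ≤ max 0 ((a * (starRingEnd ℂ) c).re / Complex.normSq c)) :
    t ^ 2 * Complex.normSq c ≤ Complex.normSq a := by
  set q := Complex.normSq c with hq
  set r := (a * (starRingEnd ℂ) c).re with hr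
  rcases (Complex.normSq_nonneg c).eq_or_lt with h | h
  · rw [← hq] at h; rw [← h, mul_zero]; exact Complex.normSq_nonneg a
  · rw [← hq] at h
    have hr2 : r ^ 2 ≤ Complex.normSq a * q := by
      have h1 : r ^ 2 ≤ Complex.normSq (a * (starRingEnd ℂ) c) := by
        rw [Complex.normSq_apply]
        nlinarith [sq_nonneg (a * (starRingEnd ℂ) c).im]
      rwa [Complex.normSq_mul, Complex.normSq_conj] at h1
    have hM : t * q ≤ max 0 r := by
      have h2 := mul_le_mul_of_nonneg_right hts h.le
      have h3 : max 0 (r / q) * q = max 0 r := by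
        rcases le_total r 0 with h'|h'
        · rw [max_eq_left (div_nonpos_of_nonpos_of_nonneg h' h.le), max_eq_left h', zero_mul]
        · rw [max_eq_right (div_nonneg h' h.le), max_eq_right h', div_mul_cancel₀ _ h.ne']
      rwa [h3] at h2
    have hM2 : (max 0 r) ^ 2 ≤ r ^ 2 := by
      rcases le_total r 0 with h'|h'
      · rw [max_eq_left h']; nlinarith [sq_nonneg r]
      · rw [max_eq_right h']
    nlinarith [mul_self_le_mul_self (mul_nonneg h0 h.le) hM, mul_nonneg h0 h.le]

lemma seg_proj (α α₁ α₂ : ℂ) : ∃ t ∈ Set.Icc (0:ℝ) 1,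
    (1 - t) ^ 2 * Complex.normSq (α₁ - α₂) ≤ Complex.normSq (α - α₁) ∧
    t ^ 2 * Complex.normSq (α₁ - α₂) ≤ Complex.normSq (α - α₂) := by
  by_cases hD : Complex.normSq (α₁ - α₂) = 0
  · exact ⟨0, ⟨le_refl _, zero_le_one⟩, by
      rw [hD, mul_zero]; exact Complex.normSq_nonneg _, by
      rw [hD, mul_zero]; exact Complex.normSq_nonneg _⟩
  · have hDpos : 0 < Complex.normSq (α₁ - α₂) := (Complex.normSq_nonneg _).lt_of_ne (Ne.symm hD)
    set D := Complex.normSq (α₁ - α₂) with hDdef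
    set s := ((α - α₂) * (starRingEnd ℂ) (α₁ - α₂)).re / D with hs
    refine ⟨min 1 (max 0 s), ⟨le_min zero_le_one (le_max_left 0 s), min_le_left _ _⟩, ?_, ?_⟩
    · have hswap : D = Complex.normSq (α₂ - α₁) := by rw [hDdef, ← neg_sub, Complex.normSq_neg]
      rw [hswap]
      apply aux_cs _ _ _ (by linarith [min_le_left 1 (max 0 s)])
      have hre : ((α - α₁) * (starRingEnd ℂ) (α₂ - α₁)).re
          = D - ((α - α₂) * (starRingEnd ℂ) (α₁ - α₂)).re := by
        have hexp : (α - α₁) * (starRingEnd ℂ) (α₂ - α₁)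
            = (α₁ - α₂) * (starRingEnd ℂ) (α₁ - α₂) - (α - α₂) * (starRingEnd ℂ) (α₁ - α₂) := by
          rw [map_sub, map_sub]; ring
        rw [hexp, Complex.sub_re, Complex.mul_conj]
        simp [hDdef]
      rw [← hswap, hre]
      have hsval : ((α - α₂) * (starRingEnd ℂ) (α₁ - α₂)).re = s * D := by
        rw [hs, div_mul_cancel₀ _ (ne_of_gt hDpos)]
      rw [hsval]
      have h1 : (D - s * D) / D = 1 - s := by field_simp
      rw [h1]
      rcases le_total s 0 with h'|h'
      · rw [max_eq_left h', min_eq_right zero_le_one]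
        have := le_max_right (0:ℝ) (1-s); linarith
      · rw [max_eq_right h']
        rcases le_total s 1 with h''|h''
        · rw [min_eq_right h'']
          exact le_max_right _ _
        · rw [min_eq_left h'']
          simp
    · apply aux_cs _ _ _ (le_min zero_le_one (le_max_left 0 s))
      exact min_le_right _ _

/-- Proposition 2 of the paper. The supremum over `α ∈ ℂ` of the
partially-compressed likelihood `g(α)` is attained at some point of the segment joining
`α₁` and `α₂`. -/
theorem stmt_5 (N K : ℕ) (hN : 1 ≤ N) (hKN : N ≤ K)
    (z v u : Fin N → ℂ) (hu : u ≠ 0) (hpv : projPerp u *ᵥ v ≠ 0)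
    (b : ℝ) (hb : 0 ≤ b) :
    let g : ℂ → ℝ := fun α =>
      (1 + b)⁻¹ * (1 + b + nsq (z - α • v)) ^ (-((K : ℝ) + 1)) *
        (((1 + b) + nsq (projPerp u *ᵥ (z - α • v))) /
          (1 + nsq (projPerp u *ᵥ (z - α • v)))) ^ (K + 1)
    let α₁ : ℂ := (star v ⬝ᵥ v)⁻¹ * (star v ⬝ᵥ z)
    let α₂ : ℂ := (star v ⬝ᵥ (projPerp u *ᵥ v))⁻¹ * (star v ⬝ᵥ (projPerp u *ᵥ z))
    ∃ t ∈ Set.Icc (0 : ℝ) 1,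
      ∀ α : ℂ, g α ≤ g ((t : ℂ) * α₁ + ((1 - t : ℝ) : ℂ) * α₂) := by
  intro g α₁ α₂
  have hq_u : star u ⬝ᵥ u ≠ 0 := dot_self_ne_zero hu
  have hv : v ≠ 0 := by
    intro h; exact hpv (by rw [h, mulVec_zero])
  have hq_v : star v ⬝ᵥ v ≠ 0 := dot_self_ne_zero hv
  set w : Fin N → ℂ := projPerp u *ᵥ v with hwdef
  set y : Fin N → ℂ := projPerp u *ᵥ z with hydef
  have hq_w : star w ⬝ᵥ w ≠ 0 := dot_self_ne_zero hpv
  have hα₂ : α₂ = (star w ⬝ᵥ w)⁻¹ * (star w ⬝ᵥ y) := by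
    have h1 : star w ⬝ᵥ w = star v ⬝ᵥ w := proj_dot u v v hq_u
    have h2 : star w ⬝ᵥ y = star v ⬝ᵥ y := proj_dot u v z hq_u
    show (star v ⬝ᵥ w)⁻¹ * (star v ⬝ᵥ y) = _
    rw [h1, h2]
  -- quadratic decompositions
  have hf1 : ∀ α : ℂ, nsq (z - α • v)
      = Complex.normSq (α - α₁) * nsq v + nsq (z - α₁ • v) :=
    fun α => nsq_sub_smul z v hq_v α
  have hf2 : ∀ α : ℂ, nsq (projPerp u *ᵥ (z - α • v))
      = Complex.normSq (α - α₂) * nsq w + nsq (y - α₂ • w) := by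
    intro α
    have hlin : projPerp u *ᵥ (z - α • v) = y - α • w := by
      rw [mulVec_sub, mulVec_smul]
    rw [hlin, nsq_sub_smul y w hq_w α, ← hα₂]
  set A := nsq v with hA
  set B := nsq w with hB
  set c₁ := nsq (z - α₁ • v) with hc₁
  set c₂ := nsq (y - α₂ • w) with hc₂
  set D := Complex.normSq (α₁ - α₂) with hD
  have hA0 : 0 ≤ A := nsq_nonneg v
  have hB0 : 0 ≤ B := nsq_nonneg w
  have hc₁0 : 0 ≤ c₁ := nsq_nonneg _
  have hc₂0 : 0 ≤ c₂ := nsq_nonneg _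
  have hD0 : 0 ≤ D := Complex.normSq_nonneg _
  set G : ℝ → ℝ → ℝ :=
    fun s t => (1 + b)⁻¹ * ((1 + b + s) ^ (K + 1))⁻¹ * ((1 + b + t) / (1 + t)) ^ (K + 1)
    with hG
  have hgG : ∀ α : ℂ, g α = G (nsq (z - α • v)) (nsq (projPerp u *ᵥ (z - α • v))) := by
    intro α
    have hpos : (0:ℝ) ≤ 1 + b + nsq (z - α • v) := by
      have := nsq_nonneg (z - α • v); linarith
    show (1 + b)⁻¹ * (1 + b + nsq (z - α • v)) ^ (-((K : ℝ) + 1)) * _ = _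
    rw [show -((K:ℝ)+1) = -(((K+1 : ℕ)):ℝ) by push_cast; ring,
      Real.rpow_neg hpos, Real.rpow_natCast]
  have hGmono : ∀ s s' t t' : ℝ, 0 ≤ s → s ≤ s' → 0 ≤ t → t ≤ t' → G s' t' ≤ G s t := by
    intro s s' t t' hs hss ht htt
    have h1b : (0:ℝ) < 1 + b := by linarith
    have hfac1 : ((1 + b + s') ^ (K + 1))⁻¹ ≤ ((1 + b + s) ^ (K + 1))⁻¹ := by
      apply inv_anti₀ (pow_pos (by linarith) _)
      exact pow_le_pow_left₀ (by linarith) (by linarith) _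
    have hfac2 : ((1 + b + t') / (1 + t')) ^ (K + 1) ≤ ((1 + b + t) / (1 + t)) ^ (K + 1) := by
      apply pow_le_pow_left₀ (div_nonneg (by linarith) (by linarith))
      rw [div_le_div_iff₀ (by linarith) (by linarith)]
      nlinarith
    show (1 + b)⁻¹ * ((1 + b + s') ^ (K + 1))⁻¹ * ((1 + b + t') / (1 + t')) ^ (K + 1)
        ≤ (1 + b)⁻¹ * ((1 + b + s) ^ (K + 1))⁻¹ * ((1 + b + t) / (1 + t)) ^ (K + 1)
    apply mul_le_mul
    · exact mul_le_mul_of_nonneg_left hfac1 (inv_nonneg.mpr h1b.le)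
    · exact hfac2
    · exact pow_nonneg (div_nonneg (by linarith) (by linarith)) _
    · exact mul_nonneg (inv_nonneg.mpr h1b.le)
        (inv_nonneg.mpr (pow_nonneg (by linarith) _))
  -- value of g along the segment
  have hseg1 : ∀ t : ℝ, Complex.normSq (((t : ℂ) * α₁ + ((1 - t : ℝ) : ℂ) * α₂) - α₁)
      = (1 - t) ^ 2 * D := by
    intro t
    have h : ((t : ℂ) * α₁ + ((1 - t : ℝ) : ℂ) * α₂) - α₁ = (((1 - t : ℝ)) : ℂ) * (α₂ - α₁) := by
      push_cast; ring
    rw [h, Complex.normSq_mul, Complex.normSq_ofReal, hD, ← neg_sub α₂ α₁, Complex.normSq_neg]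
    ring
  have hseg2 : ∀ t : ℝ, Complex.normSq (((t : ℂ) * α₁ + ((1 - t : ℝ) : ℂ) * α₂) - α₂)
      = t ^ 2 * D := by
    intro t
    have h : ((t : ℂ) * α₁ + ((1 - t : ℝ) : ℂ) * α₂) - α₂ = ((t : ℝ) : ℂ) * (α₁ - α₂) := by
      push_cast; ring
    rw [h, Complex.normSq_mul, Complex.normSq_ofReal, hD]
    ring
  set Φ : ℝ → ℝ := fun t => G ((1 - t) ^ 2 * D * A + c₁) (t ^ 2 * D * B + c₂) with hΦdef
  have hΦ : ∀ t : ℝ, g ((t : ℂ) * α₁ + ((1 - t : ℝ) : ℂ) * α₂) = Φ t := by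
    intro t
    rw [hgG, hf1, hf2, hseg1 t, hseg2 t]
  have hcont : Continuous Φ := by
    have hd1 : ∀ t : ℝ, ((1 + b + ((1 - t) ^ 2 * D * A + c₁)) ^ (K + 1)) ≠ 0 := by
      intro t
      have h1 : 0 ≤ (1 - t) ^ 2 * D * A := mul_nonneg (mul_nonneg (sq_nonneg _) hD0) hA0
      exact ne_of_gt (pow_pos (by linarith) _)
    have hd2 : ∀ t : ℝ, (1 + (t ^ 2 * D * B + c₂)) ≠ 0 := by
      intro t
      have h1 : 0 ≤ t ^ 2 * D * B := mul_nonneg (mul_nonneg (sq_nonneg _) hD0) hB0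
      exact ne_of_gt (by linarith)
    show Continuous fun t : ℝ =>
      (1 + b)⁻¹ * ((1 + b + ((1 - t) ^ 2 * D * A + c₁)) ^ (K + 1))⁻¹ *
        ((1 + b + (t ^ 2 * D * B + c₂)) / (1 + (t ^ 2 * D * B + c₂))) ^ (K + 1)
    apply Continuous.mul
    · apply Continuous.mul continuous_const
      exact Continuous.inv₀ (by fun_prop) hd1
    · exact Continuous.pow (Continuous.div (by fun_prop) (by fun_prop) hd2) _
  obtain ⟨tm, htm, hmax⟩ :=
    (isCompact_Icc : IsCompact (Set.Icc (0:ℝ) 1)).exists_isMaxOn ⟨0, by simp⟩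
      hcont.continuousOn
  refine ⟨tm, htm, ?_⟩
  intro α
  obtain ⟨t', ht', hp1, hp2⟩ := seg_proj α α₁ α₂
  have step1 : g α = G (Complex.normSq (α - α₁) * A + c₁) (Complex.normSq (α - α₂) * B + c₂) := by
    rw [hgG, hf1, hf2]
  have step2 : G (Complex.normSq (α - α₁) * A + c₁) (Complex.normSq (α - α₂) * B + c₂) ≤ Φ t' := by
    apply hGmono
    · have h1 : 0 ≤ (1 - t') ^ 2 * D * A := mul_nonneg (mul_nonneg (sq_nonneg _) hD0) hA0
      linarith
    · have := mul_le_mul_of_nonneg_right hp1 hA0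
      nlinarith
    · have h1 : 0 ≤ t' ^ 2 * D * B := mul_nonneg (mul_nonneg (sq_nonneg _) hD0) hB0
      linarith
    · have := mul_le_mul_of_nonneg_right hp2 hB0
      nlinarith
  have step3 : Φ t' ≤ Φ tm := hmax ht'
  rw [step1, hΦ tm]
  exact le_trans step2 step3
end

section
/- Let C ∈ ℂ^{N×N} be Hermitian positive definite, let u, w ∈ ℂ^N with u ≠ 0, and let ν ≥ 0. Write w̃ = C^{−1/2} w and ũ = C^{−1/2} u. Then Re(w† C⁻¹ w) − ν |u† C⁻¹ w|² / (1 + ν · Re(u† C⁻¹ u)) = (‖w̃‖² + ν ‖ũ‖² ‖P⊥_ũ w̃‖²) / (1 + ν ‖ũ‖²). -/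
open Matrix
open scoped ComplexOrder
open scoped MatrixOrder

lemma nsq_eq_sum {N : ℕ} (x : Fin N → ℂ) : nsq x = ∑ i, Complex.normSq (x i) := by
  simp [nsq, dotProduct, ← Complex.normSq_eq_conj_mul_self]

lemma dot_self_eq {N : ℕ} (x : Fin N → ℂ) : star x ⬝ᵥ x = ((nsq x : ℝ) : ℂ) := by
  simp [dotProduct, Complex.normSq_eq_conj_mul_self, nsq_eq_sum]

lemma nsq_pos {N : ℕ} {x : Fin N → ℂ} (hx : x ≠ 0) : 0 < nsq x := by
  rw [nsq_eq_sum]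
  obtain ⟨i, hi⟩ : ∃ i, x i ≠ 0 := by
    by_contra h
    push_neg at h
    exact hx (funext h)
  exact Finset.sum_pos' (fun j _ => Complex.normSq_nonneg _)
    ⟨i, Finset.mem_univ i, Complex.normSq_pos.2 hi⟩

lemma vecMulVec_mulVec' {N : ℕ} (q r x : Fin N → ℂ) :
    vecMulVec q r *ᵥ x = (r ⬝ᵥ x) • q := by
  ext i
  simp [vecMulVec_apply, mulVec, dotProduct, Finset.mul_sum, mul_assoc, mul_comm, mul_left_comm]

/-- Appendix C of the paper. Whitening identity rewriting the exponent
of the two-step likelihood under `H₁`: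
`Re(w†C⁻¹w) − ν|u†C⁻¹w|²/(1 + ν·Re(u†C⁻¹u)) = (‖w̃‖² + ν‖ũ‖²‖P⊥_ũ w̃‖²)/(1 + ν‖ũ‖²)`. -/
theorem stmt_15 (N : ℕ) (C : Matrix (Fin N) (Fin N) ℂ) (hC : C.PosDef)
    (u w : Fin N → ℂ) (hu : u ≠ 0) (ν : ℝ) (hν : 0 ≤ ν) :
    let wt : Fin N → ℂ := (CFC.sqrt C)⁻¹ *ᵥ w
    let ut : Fin N → ℂ := (CFC.sqrt C)⁻¹ *ᵥ u
    (star w ⬝ᵥ (C⁻¹ *ᵥ w)).re -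
        ν * ‖star u ⬝ᵥ (C⁻¹ *ᵥ w)‖ ^ 2 /
          (1 + ν * (star u ⬝ᵥ (C⁻¹ *ᵥ u)).re) =
      (nsq wt + ν * nsq ut * nsq (projPerp ut *ᵥ wt)) / (1 + ν * nsq ut) := by
  intro wt ut
  set S := CFC.sqrt C with hSdef
  have hSH : S.IsHermitian := (Matrix.nonneg_iff_posSemidef.mp (CFC.sqrt_nonneg C)).1
  have hSS : S * S = C := CFC.sqrt_mul_sqrt_self C (Matrix.nonneg_iff_posSemidef.mpr hC.posSemidef)
  have hdet : IsUnit S.det := by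
    have h1 : S.det * S.det = C.det := by rw [← det_mul, hSS]
    have hC0 : C.det ≠ 0 := hC.det_pos.ne'
    exact isUnit_iff_ne_zero.mpr (fun h => hC0 (by rw [← h1, h, mul_zero]))
  have hSinvH : S⁻¹.IsHermitian := hSH.inv
  have hCinv : C⁻¹ = S⁻¹ * S⁻¹ := by rw [← hSS, Matrix.mul_inv_rev]
  have key : ∀ x y : Fin N → ℂ,
      star x ⬝ᵥ (C⁻¹ *ᵥ y) = star (S⁻¹ *ᵥ x) ⬝ᵥ (S⁻¹ *ᵥ y) := by
    intro x y
    rw [hCinv, ← mulVec_mulVec, dotProduct_mulVec, star_mulVec, hSinvH.eq]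
  have hut : ut ≠ 0 := by
    intro h
    apply hu
    have : S *ᵥ (S⁻¹ *ᵥ u) = u := by
      rw [mulVec_mulVec, Matrix.mul_nonsing_inv S hdet, one_mulVec]
    rw [← this, show S⁻¹ *ᵥ u = ut from rfl, h, mulVec_zero]
  set a : ℝ := nsq wt with ha
  set b : ℝ := nsq ut with hb
  have hbpos : 0 < b := nsq_pos hut
  set c : ℂ := star ut ⬝ᵥ wt with hc
  have hww : star w ⬝ᵥ (C⁻¹ *ᵥ w) = ((a : ℝ) : ℂ) := by rw [key, ← dot_self_eq]
  have huu : star u ⬝ᵥ (C⁻¹ *ᵥ u) = ((b : ℝ) : ℂ) := by rw [key, ← dot_self_eq]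
  have huw : star u ⬝ᵥ (C⁻¹ *ᵥ w) = c := key u w
  have hbC : (b : ℂ) ≠ 0 := by exact_mod_cast hbpos.ne'
  have hproj : projPerp ut *ᵥ wt = wt - ((b : ℂ)⁻¹ * c) • ut := by
    rw [projPerp, sub_mulVec, one_mulVec, smul_mulVec, vecMulVec_mulVec',
      dot_self_eq, ← hb, ← hc, smul_smul]
  have hcwu : star wt ⬝ᵥ ut = starRingEnd ℂ c := by
    rw [hc, star_dotProduct]; rfl
  have hnproj : (nsq (projPerp ut *ᵥ wt) : ℝ) = a - Complex.normSq c / b := by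
    have hdot : star (projPerp ut *ᵥ wt) ⬝ᵥ (projPerp ut *ᵥ wt)
        = ((a : ℝ) : ℂ) - (Complex.normSq c : ℝ) / (b : ℂ) := by
      rw [hproj]
      rw [star_sub, star_smul, sub_dotProduct, dotProduct_sub, dotProduct_sub,
        smul_dotProduct, smul_dotProduct, dotProduct_smul, dotProduct_smul,
        ← dot_self_eq wt, ← hc, hcwu, dot_self_eq ut, ← hb]
      simp only [smul_eq_mul, star_mul', star_inv₀, Complex.star_def, Complex.conj_ofReal]
      have hcc : (starRingEnd ℂ) c * c = ((Complex.normSq c : ℝ) : ℂ) :=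
        Complex.normSq_eq_conj_mul_self (z := c) ▸ rfl
      field_simp
      ring_nf
      rw [mul_comm c ((starRingEnd ℂ) c), hcc]
    have := congrArg Complex.re hdot
    simpa [nsq] using this
  rw [hww, huu, huw, hnproj, Complex.sq_norm]
  simp only [Complex.ofReal_re]
  have h1 : (0:ℝ) < 1 + ν * b := by positivity
  field_simp
  ring
end
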